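/- arXiv:1404.5452 — 2 statements merged into one kernel-verified Lean document; each statement's English description precedes it below -/
import Mathlib

section
/- For every p > 1 and all real numbers ξ, η, one has |ξ⁻ − η⁻|^p ≤ |ξ − η|^{p−2}(ξ − η)(η⁻ − ξ⁻), where t⁻ := max(−t, 0) denotes the negative part of t ∈ ℝ. -/
open MeasureTheory Filter

/-- The Gagliardo `p`-seminorm raised to the power `p`, as an extended real. -/
noncomputable def gagP (N : ℕ) (s p : ℝ) (u : EuclideanSpace ℝ (Fin N) → ℝ) : ENNReal :=
  ∫⁻ x, ∫⁻ y, ENNReal.ofReal (|u x - u y| ^ p / ‖x - y‖ ^ ((N : ℝ) + s * p))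

/-- The Gagliardo `p`-seminorm `[u]_{s,p}`. -/
noncomputable def gag (N : ℕ) (s p : ℝ) (u : EuclideanSpace ℝ (Fin N) → ℝ) : ℝ :=
  ((gagP N s p u).toReal) ^ (1 / p)

/-- The weak form of the fractional `p`-Laplacian tested against `v`. -/
noncomputable def pairing (N : ℕ) (s p : ℝ) (u v : EuclideanSpace ℝ (Fin N) → ℝ) : ℝ :=
  ∫ x, ∫ y, |u x - u y| ^ (p - 2) * (u x - u y) * (v x - v y) / ‖x - y‖ ^ ((N : ℝ) + s * p)

/-- `F(t) = ∫_0^t f`. -/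
noncomputable def Fint (f : ℝ → ℝ) (t : ℝ) : ℝ := ∫ τ in (0:ℝ)..t, f τ

/-- Membership in `D^{s,p}(ℝ^N)`: `u ∈ L^{p*_s}` and finite Gagliardo seminorm. -/
def memDsp (N : ℕ) (s p : ℝ) (u : EuclideanSpace ℝ (Fin N) → ℝ) : Prop :=
  MemLp u (ENNReal.ofReal (N * p / (N - s * p))) volume ∧ gagP N s p u < ⊤

/-- Membership in `X_R`: in `D^{s,p}` and vanishing (a.e.) outside `B(0,R)`. -/
def memX (N : ℕ) (s p R : ℝ) (u : EuclideanSpace ℝ (Fin N) → ℝ) : Prop :=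
  memDsp N s p u ∧ ∀ᵐ x, x ∉ Metric.ball (0 : EuclideanSpace ℝ (Fin N)) R → u x = 0

/-- The energy functional `J_R`. -/
noncomputable def JR (N : ℕ) (s p R : ℝ) (φ : EuclideanSpace ℝ (Fin N) → ℝ) (f : ℝ → ℝ)
    (u : EuclideanSpace ℝ (Fin N) → ℝ) : ℝ :=
  (1 / p) * (gagP N s p u).toReal -
    ∫ x in Metric.ball (0 : EuclideanSpace ℝ (Fin N)) R, φ x * Fint f (max (u x) 0)

/-! The negative part is antitone and 1-Lipschitz, so `(ξ - η)(η⁻ - ξ⁻) = |ξ - η| |ξ⁻ - η⁻|` and the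
right-hand side is `|ξ - η|^(p-1) |ξ⁻ - η⁻| ≥ |ξ⁻ - η⁻|^(p-1) |ξ⁻ - η⁻|`. -/

theorem Antitone.sub_mul_sub_eq_abs_mul_abs {α : Type*} [Ring α] [LinearOrder α]
    [IsStrictOrderedRing α] {f : α → α} (hf : Antitone f) (a b : α) :
    (a - b) * (f b - f a) = |a - b| * |f a - f b| := by
  have hnonneg : 0 ≤ (a - b) * (f b - f a) := by
    rcases le_total a b with hab | hab
    · exact mul_nonneg_of_nonpos_of_nonpos (sub_nonpos.2 hab) (sub_nonpos.2 (hf hab))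
    · exact mul_nonneg (sub_nonneg.2 hab) (sub_nonneg.2 (hf hab))
  rw [← abs_of_nonneg hnonneg, abs_mul, abs_sub_comm (f b)]

theorem Real.rpow_le_rpow_sub_one_mul {c d p : ℝ} (hc : 0 ≤ c) (hcd : c ≤ d) (hp : 1 ≤ p) :
    c ^ p ≤ d ^ (p - 1) * c := by
  calc c ^ p = c ^ (p - 1 + 1) := by rw [sub_add_cancel]
    _ = c ^ (p - 1) * c := Real.rpow_add_one' hc (by linarith)
    _ ≤ d ^ (p - 1) * c :=
      mul_le_mul_of_nonneg_right (Real.rpow_le_rpow hc hcd (by linarith)) hc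

theorem negPart_pow_le (p : ℝ) (hp : 1 < p) (ξ η : ℝ) :
    |max (-ξ) 0 - max (-η) 0| ^ p ≤
      |ξ - η| ^ (p - 2) * (ξ - η) * (max (-η) 0 - max (-ξ) 0) := by
  have hanti : Antitone fun t : ℝ => max (-t) 0 := fun _ _ hab =>
    max_le_max (neg_le_neg hab) le_rfl
  have hlip : |max (-ξ) 0 - max (-η) 0| ≤ |ξ - η| := by
    simpa only [neg_sub_neg, abs_sub_comm η] using abs_max_sub_max_le_abs (-ξ) (-η) 0
  calc |max (-ξ) 0 - max (-η) 0| ^ p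
      ≤ |ξ - η| ^ (p - 1) * |max (-ξ) 0 - max (-η) 0| :=
        Real.rpow_le_rpow_sub_one_mul (abs_nonneg _) hlip hp.le
    _ = |ξ - η| ^ (p - 2) * (|ξ - η| * |max (-ξ) 0 - max (-η) 0|) := by
        rw [← mul_assoc, ← Real.rpow_add_one' (abs_nonneg _) (by linarith)]
        ring_nf
    _ = |ξ - η| ^ (p - 2) * (ξ - η) * (max (-η) 0 - max (-ξ) 0) := by
        rw [mul_assoc, hanti.sub_mul_sub_eq_abs_mul_abs ξ η]
end

section
/- Assume p > 1, s ∈ (0,1), N > sp, that φ ∈ L^∞_loc(ℝ^N) satisfies condition (W), that f : [0,∞) → ℝ is continuous and satisfies (f1), (f2) (with p−1 < q < p*_s − 1) and (f3), and fix R > 0. Let (u_j) ⊂ X_R, c ∈ ℝ, and (ε_j) with ε_j → 0 satisfy J_R(u_j) → c and |∫_{ℝ^N}∫_{ℝ^N} |u_j(x)−u_j(y)|^{p−2}(u_j(x)−u_j(y))(v(x)−v(y))/|x−y|^{N+sp} dx dy − ∫_{B(0,R)} φ(x) f(u_j⁺(x)) v(x) dx| ≤ ε_j [v]_{s,p} for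 all v ∈ X_R. Then the sequence (u_j) is bounded in the Gagliardo seminorm: there is a constant C' = C'(s, R, p, q, m, c, φ, f) such that sup_j [u_j]_{s,p} ≤ C'. -/
open MeasureTheory Filter

/-!
Testing the almost-criticality of `u_j` against `v = u_j` and subtracting it from `(q + 1) J_R(u_j)`
gives the Ambrosetti–Rabinowitz identity
`((q + 1) / p - 1) [u]^p = (q + 1) J_R(u) - J_R'(u) u + ∫_{B_R} φ G(u⁺)`,
`G(t) = (q + 1) F(t) - f(t) t`. By (f2) and (f3), `0 ≤ G(t) ≤ δ t^p + K_δ` for every `δ > 0`, and a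
fractional Poincaré inequality (functions of `X_R` vanish on the annulus `2R < |y| < 3R`) bounds
`∫_{B_R} |u|^p` by a multiple of `[u]^p`. So the last term is at most half of the left-hand side
plus a constant, whence `[u_j]^p ≲ 1 + [u_j]`, and `p > 1` bounds `[u_j]`.
-/

open Set Metric

theorem abs_rpow_sub_two_mul_self_mul_self {p : ℝ} (hp : p ≠ 0) (a : ℝ) :
    |a| ^ (p - 2) * a * a = |a| ^ p := by
  rcases eq_or_ne a 0 with rfl | ha
  · simp [Real.zero_rpow hp]
  · rw [mul_assoc, ← abs_mul_abs_self, ← mul_assoc, ← Real.rpow_add_one (abs_ne_zero.2 ha),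
      ← Real.rpow_add_one (abs_ne_zero.2 ha)]
    ring_nf

theorem max_zero_le_abs (t : ℝ) : max t 0 ≤ |t| := max_le (le_abs_self t) (abs_nonneg t)

theorem exists_mul_rpow_le_mul_rpow_add {θ p C δ : ℝ} (hθ : 0 ≤ θ) (hθp : θ < p) (hC : 0 ≤ C)
    (hδ : 0 < δ) : ∃ K, ∀ t : ℝ, 1 ≤ t → C * t ^ θ ≤ δ * t ^ p + K := by
  set T := max 1 ((C / δ) ^ (p - θ)⁻¹)
  refine ⟨C * T ^ θ, fun t ht => ?_⟩
  have ht0 : 0 < t := one_pos.trans_le ht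
  rcases le_total t T with htT | hTt
  · have : C * t ^ θ ≤ C * T ^ θ := by gcongr
    linarith [show 0 ≤ δ * t ^ p by positivity]
  · have hCδ : C ≤ δ * t ^ (p - θ) := by
      have := Real.rpow_le_rpow (by positivity) ((le_max_right _ _).trans hTt) (sub_pos.2 hθp).le
      rwa [← Real.rpow_mul (by positivity), inv_mul_cancel₀ (sub_pos.2 hθp).ne', Real.rpow_one,
        div_le_iff₀ hδ, mul_comm] at this
    calc C * t ^ θ ≤ δ * t ^ (p - θ) * t ^ θ := by gcongr
      _ = δ * t ^ p := by rw [mul_assoc, ← Real.rpow_add ht0, sub_add_cancel]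
      _ ≤ δ * t ^ p + C * T ^ θ := le_add_of_nonneg_right (by positivity)

theorem exists_le_of_mul_rpow_le_add_mul {p a M E : ℝ} (hp : 1 < p) (ha : 0 < a) :
    ∃ C', ∀ X : ℝ, 0 ≤ X → a * X ^ p ≤ M + E * X → X ≤ C' := by
  refine ⟨max 1 (((|M| + E) / a) ^ (p - 1)⁻¹), fun X hX0 hX => ?_⟩
  rcases le_or_gt X 1 with hX1 | hX1
  · exact hX1.trans (le_max_left _ _)
  have hXpos : 0 < X := one_pos.trans hX1
  have hXp : X ^ (p - 1) ≤ (|M| + E) / a := by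
    have : a * X ^ (p - 1) * X ≤ (|M| + E) * X := by
      rw [mul_assoc, ← Real.rpow_add_one hXpos.ne', sub_add_cancel]
      nlinarith [le_abs_self M, abs_nonneg M]
    rw [le_div_iff₀ ha, mul_comm]
    exact le_of_mul_le_mul_right this hXpos
  calc X = (X ^ (p - 1)) ^ (p - 1)⁻¹ := by
        rw [← Real.rpow_mul hX0, mul_inv_cancel₀ (by linarith), Real.rpow_one]
    _ ≤ ((|M| + E) / a) ^ (p - 1)⁻¹ := by gcongr
    _ ≤ _ := le_max_right _ _

section Nonlinearity

variable {f : ℝ → ℝ} {q c : ℝ}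

theorem Fint_nonneg (hf : ∀ t ≥ (0:ℝ), 0 ≤ f t) {t : ℝ} (ht : 0 ≤ t) : 0 ≤ Fint f t :=
  intervalIntegral.integral_nonneg ht fun τ hτ => hf τ hτ.1

theorem Fint_le_of_le_mul_rpow (hfc : ContinuousOn f (Ici 0)) (hq : -1 < q)
    (hfle : ∀ t ≥ (0:ℝ), f t ≤ c * t ^ q) {t : ℝ} (ht : 0 ≤ t) :
    Fint f t ≤ c / (q + 1) * t ^ (q + 1) := by
  have hint : IntervalIntegrable f volume 0 t :=
    (hfc.mono (by rw [uIcc_of_le ht]; exact Icc_subset_Ici_self)).intervalIntegrable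
  calc Fint f t ≤ ∫ τ in (0:ℝ)..t, c * τ ^ q :=
        intervalIntegral.integral_mono_on ht hint
          ((intervalIntegral.intervalIntegrable_rpow' hq).const_mul c) fun τ hτ => hfle τ hτ.1
    _ = c / (q + 1) * t ^ (q + 1) := by
        rw [intervalIntegral.integral_const_mul, integral_rpow (Or.inl hq),
          Real.zero_rpow (by linarith)]
        ring

theorem continuous_comp_max_zero (hfc : ContinuousOn f (Ici 0)) :
    Continuous fun t => f (max t 0) :=
  hfc.comp_continuous (continuous_id.max continuous_const) fun t => le_max_right t 0

theorem continuous_Fint_comp_max_zero (hfc : ContinuousOn f (Ici 0)) :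
    Continuous fun t => Fint f (max t 0) := by
  have hprim := intervalIntegral.continuous_primitive
    (μ := volume) (fun a b => (continuous_comp_max_zero hfc).intervalIntegrable a b) 0
  refine (hprim.comp (continuous_id.max (continuous_const (y := (0:ℝ))))).congr fun t => ?_
  refine intervalIntegral.integral_congr fun τ hτ => ?_
  rw [uIcc_of_le (le_max_right _ _)] at hτ
  simp [max_eq_left hτ.1]

theorem exists_add_one_mul_Fint_sub_le {p m C δ : ℝ} (hfc : ContinuousOn f (Ici 0))
    (hf0 : ∀ t ≥ (0:ℝ), 0 ≤ f t) (hq : -1 < q) (hc : 0 ≤ c)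
    (hfle : ∀ t ≥ (0:ℝ), f t ≤ c * t ^ q)
    (hdefect : ∀ t ≥ (0:ℝ), (q + 1) * Fint f t - f t * t ≤ C * t ^ m)
    (hp : 0 < p) (hm : m < p) (hC : 0 ≤ C) (hδ : 0 < δ) :
    ∃ K, ∀ t ≥ (0:ℝ), (q + 1) * Fint f t - f t * t ≤ δ * t ^ p + K := by
  obtain ⟨K, hK⟩ := exists_mul_rpow_le_mul_rpow_add (le_max_right m 0) (max_lt hm hp) hC hδ
  refine ⟨max c K, fun t ht => ?_⟩
  rcases le_total t 1 with ht1 | ht1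
  · -- near `0` the bound `C t ^ m` is useless when `m < 0`; use the growth bound on `f` instead
    have hF : (q + 1) * Fint f t ≤ c * t ^ (q + 1) := by
      have := mul_le_mul_of_nonneg_left (Fint_le_of_le_mul_rpow hfc hq hfle ht)
        (by linarith : 0 ≤ q + 1)
      rwa [← mul_assoc, mul_div_cancel₀ _ (by linarith)] at this
    have : c * t ^ (q + 1) ≤ c :=
      mul_le_of_le_one_right hc (Real.rpow_le_one ht ht1 (by linarith))
    linarith [mul_nonneg (hf0 t ht) ht, le_max_left c K, show 0 ≤ δ * t ^ p by positivity]
  · calc (q + 1) * Fint f t - f t * t ≤ C * t ^ max m 0 :=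
          (hdefect t ht).trans (by gcongr; exact le_max_left m 0)
      _ ≤ δ * t ^ p + K := hK t ht1
      _ ≤ δ * t ^ p + max c K := by gcongr; exact le_max_right c K

end Nonlinearity

section Integrals

variable {α : Type*} [MeasurableSpace α] {μ : Measure α} {φ u : α → ℝ} {f : ℝ → ℝ} {q c C₀ : ℝ}

theorem integrable_abs_rpow_of_memLp [IsFiniteMeasure μ] {P r : ℝ}
    (hu : MemLp u (ENNReal.ofReal P) μ) (hr : 0 < r) (hrP : r ≤ P) :
    Integrable (fun x => |u x| ^ r) μ := by
  have := (hu.mono_exponent (ENNReal.ofReal_le_ofReal hrP)).integrable_norm_rpow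
    (by simpa using hr) ENNReal.ofReal_ne_top
  simpa [ENNReal.toReal_ofReal hr.le, Real.norm_eq_abs] using this

theorem integrable_mul_Fint_comp_max_zero (hφ : AEStronglyMeasurable φ μ)
    (hφC : ∀ᵐ x ∂μ, |φ x| ≤ C₀) (hu : AEStronglyMeasurable u μ)
    (huq : Integrable (fun x => |u x| ^ (q + 1)) μ) (hfc : ContinuousOn f (Ici 0))
    (hf0 : ∀ t ≥ (0:ℝ), 0 ≤ f t) (hq : -1 < q) (hc : 0 ≤ c)
    (hfle : ∀ t ≥ (0:ℝ), f t ≤ c * t ^ q) :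
    Integrable (fun x => φ x * Fint f (max (u x) 0)) μ := by
  refine (huq.const_mul (C₀ * (c / (q + 1)))).mono'
    (hφ.mul ((continuous_Fint_comp_max_zero hfc).comp_aestronglyMeasurable hu)) ?_
  filter_upwards [hφC] with x hx
  have h0 : 0 ≤ max (u x) 0 := le_max_right _ _
  have hF : Fint f (max (u x) 0) ≤ c / (q + 1) * |u x| ^ (q + 1) :=
    (Fint_le_of_le_mul_rpow hfc hq hfle h0).trans <| mul_le_mul_of_nonneg_left
      (Real.rpow_le_rpow h0 (max_zero_le_abs _) (by linarith)) (div_nonneg hc (by linarith))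
  rw [norm_mul, Real.norm_eq_abs, Real.norm_eq_abs, abs_of_nonneg (Fint_nonneg hf0 h0), mul_assoc]
  exact mul_le_mul hx hF (Fint_nonneg hf0 h0) ((abs_nonneg _).trans hx)

theorem integrable_mul_comp_max_zero_mul (hφ : AEStronglyMeasurable φ μ)
    (hφC : ∀ᵐ x ∂μ, |φ x| ≤ C₀) (hu : AEStronglyMeasurable u μ)
    (huq : Integrable (fun x => |u x| ^ (q + 1)) μ) (hfc : ContinuousOn f (Ici 0))
    (hf0 : ∀ t ≥ (0:ℝ), 0 ≤ f t) (hq : 0 ≤ q) (hc : 0 ≤ c)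
    (hfle : ∀ t ≥ (0:ℝ), f t ≤ c * t ^ q) :
    Integrable (fun x => φ x * f (max (u x) 0) * u x) μ := by
  refine (huq.const_mul (C₀ * c)).mono'
    ((hφ.mul ((continuous_comp_max_zero hfc).comp_aestronglyMeasurable hu)).mul hu) ?_
  filter_upwards [hφC] with x hx
  have h0 : 0 ≤ max (u x) 0 := le_max_right _ _
  have hf : f (max (u x) 0) ≤ c * |u x| ^ q := (hfle _ h0).trans <|
    mul_le_mul_of_nonneg_left (Real.rpow_le_rpow h0 (max_zero_le_abs _) hq) hc
  calc ‖φ x * f (max (u x) 0) * u x‖ = |φ x| * f (max (u x) 0) * |u x| := by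
        rw [norm_mul, norm_mul, Real.norm_eq_abs, Real.norm_eq_abs, Real.norm_eq_abs,
          abs_of_nonneg (hf0 _ h0)]
    _ ≤ C₀ * (c * |u x| ^ q) * |u x| := by
        gcongr
        exacts [hf0 _ h0, (abs_nonneg _).trans hx]
    _ = C₀ * c * |u x| ^ (q + 1) := by
        rw [Real.rpow_add_one' (abs_nonneg _) (by linarith)]; ring

theorem mul_add_one_mul_Fint_sub_eq (hf00 : f 0 = 0) (a t : ℝ) :
    a * ((q + 1) * Fint f (max t 0) - f (max t 0) * max t 0) =
      (q + 1) * (a * Fint f (max t 0)) - a * f (max t 0) * t := by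
  rcases le_total 0 t with h | h
  · rw [max_eq_left h]
    ring
  · rw [max_eq_right h, hf00]
    ring

theorem integral_mul_comp_max_zero_le [IsFiniteMeasure μ] {g : ℝ → ℝ} {p δ K : ℝ} (hp : 0 ≤ p)
    (hδ : 0 ≤ δ) (hφC : ∀ᵐ x ∂μ, |φ x| ≤ C₀) (hg0 : ∀ t ≥ (0:ℝ), 0 ≤ g t)
    (hg : ∀ t ≥ (0:ℝ), g t ≤ δ * t ^ p + K) (hint : Integrable (fun x => φ x * g (max (u x) 0)) μ)
    (hup : Integrable (fun x => |u x| ^ p) μ) :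
    ∫ x, φ x * g (max (u x) 0) ∂μ ≤ C₀ * (δ * (∫ x, |u x| ^ p ∂μ) + K * μ.real univ) := by
  have hdom := ((hup.const_mul δ).add (integrable_const K)).const_mul C₀
  calc ∫ x, φ x * g (max (u x) 0) ∂μ ≤ ∫ x, C₀ * (δ * |u x| ^ p + K) ∂μ := by
        refine integral_mono_ae hint hdom ?_
        filter_upwards [hφC] with x hx
        have h0 : 0 ≤ max (u x) 0 := le_max_right _ _
        have hgx : g (max (u x) 0) ≤ δ * |u x| ^ p + K :=
          (hg _ h0).trans (by gcongr; exact max_zero_le_abs _)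
        calc φ x * g (max (u x) 0) ≤ |φ x| * g (max (u x) 0) :=
              mul_le_mul_of_nonneg_right (le_abs_self _) (hg0 _ h0)
          _ ≤ C₀ * (δ * |u x| ^ p + K) := mul_le_mul hx hgx (hg0 _ h0) ((abs_nonneg _).trans hx)
    _ = C₀ * (δ * (∫ x, |u x| ^ p ∂μ) + K * μ.real univ) := by
        rw [integral_const_mul, integral_add (hup.const_mul δ) (integrable_const K),
          integral_const_mul, integral_const, smul_eq_mul, mul_comm K]

end Integrals

section Gagliardo

variable {N : ℕ} {s p : ℝ}

theorem gagP_congr_ae {u v : EuclideanSpace ℝ (Fin N) → ℝ} (h : u =ᵐ[volume] v) :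
    gagP N s p u = gagP N s p v := by
  refine lintegral_congr_ae ?_
  filter_upwards [h] with x hx
  refine lintegral_congr_ae ?_
  filter_upwards [h] with y hy
  rw [hx, hy]

theorem pairing_self_congr_ae {u v : EuclideanSpace ℝ (Fin N) → ℝ} (h : u =ᵐ[volume] v) :
    pairing N s p u u = pairing N s p v v := by
  refine integral_congr_ae ?_
  filter_upwards [h] with x hx
  refine integral_congr_ae ?_
  filter_upwards [h] with y hy
  rw [hx, hy]

theorem pairing_self_of_measurable (hp : p ≠ 0) {w : EuclideanSpace ℝ (Fin N) → ℝ}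
    (hw : Measurable w) (hfin : gagP N s p w ≠ ⊤) :
    pairing N s p w w = (gagP N s p w).toReal := by
  set e := (N : ℝ) + s * p
  have hker : Measurable (Function.uncurry fun x y : EuclideanSpace ℝ (Fin N) =>
      ENNReal.ofReal (|w x - w y| ^ p / ‖x - y‖ ^ e)) :=
    ((((hw.comp measurable_fst).sub (hw.comp measurable_snd)).abs.pow_const p).div
      ((measurable_fst.sub measurable_snd).norm.pow_const e)).ennreal_ofReal
  have hF : Measurable fun x => ∫⁻ y, ENNReal.ofReal (|w x - w y| ^ p / ‖x - y‖ ^ e) :=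
    hker.lintegral_prod_right
  have hinner : ∀ x, ∫ y, |w x - w y| ^ (p - 2) * (w x - w y) * (w x - w y) / ‖x - y‖ ^ e =
      (∫⁻ y, ENNReal.ofReal (|w x - w y| ^ p / ‖x - y‖ ^ e)).toReal := fun x => by
    simp_rw [abs_rpow_sub_two_mul_self_mul_self hp]
    exact integral_eq_lintegral_of_nonneg_ae (Eventually.of_forall fun y => by positivity)
      ((((measurable_const.sub hw).abs.pow_const p).div
        ((measurable_const.sub measurable_id).norm.pow_const e)).aestronglyMeasurable)
  calc pairing N s p w w = ∫ x, (∫⁻ y, ENNReal.ofReal (|w x - w y| ^ p / ‖x - y‖ ^ e)).toReal :=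
        integral_congr_ae (Eventually.of_forall hinner)
    _ = (gagP N s p w).toReal := integral_toReal hF.aemeasurable (ae_lt_top hF hfin)

theorem pairing_self (hp : p ≠ 0) {u : EuclideanSpace ℝ (Fin N) → ℝ}
    (hu : AEStronglyMeasurable u volume) (hfin : gagP N s p u ≠ ⊤) :
    pairing N s p u u = (gagP N s p u).toReal := by
  rw [gagP_congr_ae hu.ae_eq_mk] at hfin
  rw [pairing_self_congr_ae hu.ae_eq_mk, gagP_congr_ae hu.ae_eq_mk]
  exact pairing_self_of_measurable hp hu.stronglyMeasurable_mk.measurable hfin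

theorem gag_nonneg (u : EuclideanSpace ℝ (Fin N) → ℝ) : 0 ≤ gag N s p u :=
  Real.rpow_nonneg ENNReal.toReal_nonneg _

theorem gag_rpow (hp : p ≠ 0) (u : EuclideanSpace ℝ (Fin N) → ℝ) :
    gag N s p u ^ p = (gagP N s p u).toReal := by
  rw [gag, ← Real.rpow_mul ENNReal.toReal_nonneg, one_div_mul_cancel hp, Real.rpow_one]

theorem lintegral_ball_abs_rpow_mul_le_gagP {R : ℝ} (he : 0 ≤ (N : ℝ) + s * p)
    {u : EuclideanSpace ℝ (Fin N) → ℝ}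
    (hu0 : ∀ᵐ y, y ∉ ball (0 : EuclideanSpace ℝ (Fin N)) R → u y = 0) :
    (∫⁻ x in ball (0 : EuclideanSpace ℝ (Fin N)) R, ENNReal.ofReal (|u x| ^ p)) *
        (ENNReal.ofReal ((4 * R) ^ ((N : ℝ) + s * p))⁻¹ *
          volume (ball (0 : EuclideanSpace ℝ (Fin N)) (3 * R) \ closedBall 0 (2 * R))) ≤
      gagP N s p u := by
  set e := (N : ℝ) + s * p
  set A := ball (0 : EuclideanSpace ℝ (Fin N)) (3 * R) \ closedBall 0 (2 * R)
  have hA : MeasurableSet A := measurableSet_ball.diff measurableSet_closedBall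
  have hAtop : volume A ≠ ⊤ := (measure_mono sdiff_subset).trans_lt measure_ball_lt_top |>.ne
  have key : ∀ x ∈ ball (0 : EuclideanSpace ℝ (Fin N)) R,
      ENNReal.ofReal (|u x| ^ p) * (ENNReal.ofReal ((4 * R) ^ e)⁻¹ * volume A) ≤
        ∫⁻ y, ENNReal.ofReal (|u x - u y| ^ p / ‖x - y‖ ^ e) := by
    intro x hx
    rw [mem_ball_zero_iff] at hx
    calc ENNReal.ofReal (|u x| ^ p) * (ENNReal.ofReal ((4 * R) ^ e)⁻¹ * volume A)
        = ∫⁻ _ in A, ENNReal.ofReal (|u x| ^ p * ((4 * R) ^ e)⁻¹) := by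
          rw [setLIntegral_const, ENNReal.ofReal_mul (by positivity), mul_assoc]
      _ ≤ ∫⁻ y in A, ENNReal.ofReal (|u x - u y| ^ p / ‖x - y‖ ^ e) := by
          refine lintegral_mono_ae ?_
          filter_upwards [ae_restrict_of_ae hu0, ae_restrict_mem hA] with y hy0 hy
          obtain ⟨hy3, hy2⟩ := hy
          rw [mem_ball_zero_iff] at hy3
          rw [mem_closedBall_zero_iff, not_le] at hy2
          have hxy : ‖y‖ - ‖x‖ ≤ ‖x - y‖ := by rw [norm_sub_rev]; exact norm_sub_norm_le y x
          have hxy' : ‖x - y‖ ≤ 4 * R := (norm_sub_le x y).trans (by linarith)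
          rw [hy0 (by rw [mem_ball_zero_iff]; linarith), sub_zero, div_eq_mul_inv]
          gcongr
          exact Real.rpow_pos_of_pos (by linarith [norm_nonneg x]) e
      _ ≤ ∫⁻ y, ENNReal.ofReal (|u x - u y| ^ p / ‖x - y‖ ^ e) := setLIntegral_le_lintegral _ _
  calc (∫⁻ x in ball (0 : EuclideanSpace ℝ (Fin N)) R, ENNReal.ofReal (|u x| ^ p)) *
        (ENNReal.ofReal ((4 * R) ^ e)⁻¹ * volume A)
      = ∫⁻ x in ball (0 : EuclideanSpace ℝ (Fin N)) R,
          ENNReal.ofReal (|u x| ^ p) * (ENNReal.ofReal ((4 * R) ^ e)⁻¹ * volume A) :=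
        (lintegral_mul_const' _ _ (ENNReal.mul_ne_top ENNReal.ofReal_ne_top hAtop)).symm
    _ ≤ ∫⁻ x in ball (0 : EuclideanSpace ℝ (Fin N)) R,
          ∫⁻ y, ENNReal.ofReal (|u x - u y| ^ p / ‖x - y‖ ^ e) :=
        setLIntegral_mono' measurableSet_ball key
    _ ≤ gagP N s p u := setLIntegral_le_lintegral _ _

end Gagliardo

section BoundedDomain

variable {N : ℕ} {s p R : ℝ}

theorem exists_integral_ball_abs_rpow_le_gagP (hN : 0 < N) (he : 0 ≤ (N : ℝ) + s * p)
    (hR : 0 < R) :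
    ∃ κ : ℝ, 0 ≤ κ ∧ ∀ u : EuclideanSpace ℝ (Fin N) → ℝ, AEStronglyMeasurable u volume →
      (∀ᵐ y, y ∉ ball (0 : EuclideanSpace ℝ (Fin N)) R → u y = 0) → gagP N s p u ≠ ⊤ →
      ∫ x in ball (0 : EuclideanSpace ℝ (Fin N)) R, |u x| ^ p ≤ κ * (gagP N s p u).toReal := by
  set A := ball (0 : EuclideanSpace ℝ (Fin N)) (3 * R) \ closedBall 0 (2 * R)
  set cA := ENNReal.ofReal ((4 * R) ^ ((N : ℝ) + s * p))⁻¹ * volume A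
  have hA : volume A ≠ 0 := by
    have : Nonempty (Fin N) := ⟨⟨0, hN⟩⟩
    obtain ⟨y, hy⟩ := exists_norm_eq (EuclideanSpace ℝ (Fin N)) (by positivity : 0 ≤ 5 * R / 2)
    refine (isOpen_ball.sdiff isClosed_closedBall).measure_ne_zero volume ⟨y, ?_, ?_⟩
    · rw [mem_ball_zero_iff, hy]; linarith
    · rw [mem_closedBall_zero_iff, hy, not_le]; linarith
  have hcA0 : cA ≠ 0 :=
    mul_ne_zero (by simp only [ne_eq, ENNReal.ofReal_eq_zero, not_le]; positivity) hA
  have hcAtop : cA ≠ ⊤ := ENNReal.mul_ne_top ENNReal.ofReal_ne_top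
    ((measure_mono sdiff_subset).trans_lt measure_ball_lt_top).ne
  refine ⟨cA.toReal⁻¹, by positivity, fun u hu hu0 hfin => ?_⟩
  have hle : ∫⁻ x in ball (0 : EuclideanSpace ℝ (Fin N)) R, ENNReal.ofReal (|u x| ^ p) ≤
      gagP N s p u / cA :=
    (ENNReal.le_div_iff_mul_le (Or.inl hcA0) (Or.inl hcAtop)).2
      (lintegral_ball_abs_rpow_mul_le_gagP he hu0)
  rw [integral_eq_lintegral_of_nonneg_ae (Eventually.of_forall fun x => by positivity)
    (hu.restrict.aemeasurable.abs.pow_const p).aestronglyMeasurable]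
  calc _ ≤ (gagP N s p u / cA).toReal := ENNReal.toReal_mono (ENNReal.div_ne_top hfin hcA0) hle
    _ = cA.toReal⁻¹ * (gagP N s p u).toReal := by rw [ENNReal.toReal_div, div_eq_inv_mul]

end BoundedDomain

section Energy

variable {N : ℕ} {s p R : ℝ} {φ u : EuclideanSpace ℝ (Fin N) → ℝ} {f : ℝ → ℝ} {q : ℝ}

theorem sub_one_mul_toReal_gagP_eq (hp : p ≠ 0) (hu : memX N s p R u) :
    ((q + 1) / p - 1) * (gagP N s p u).toReal =
      (q + 1) * JR N s p R φ f u -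
        (pairing N s p u u - ∫ x in ball 0 R, φ x * f (max (u x) 0) * u x) +
        ((q + 1) * (∫ x in ball 0 R, φ x * Fint f (max (u x) 0)) -
          ∫ x in ball 0 R, φ x * f (max (u x) 0) * u x) := by
  rw [JR, pairing_self hp hu.1.1.aestronglyMeasurable hu.1.2.ne]
  ring

theorem add_one_mul_integral_sub_integral_le {c C₀ δ K : ℝ} (hu : memX N s p R u) (hp : 0 < p)
    (hpq : p ≤ q + 1) (hq2 : q + 1 ≤ (N : ℝ) * p / (N - s * p)) (hφ : Measurable φ)
    (hφC : ∀ x ∈ ball (0 : EuclideanSpace ℝ (Fin N)) R, |φ x| ≤ C₀)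
    (hfc : ContinuousOn f (Ici 0)) (hf0 : ∀ t ≥ (0:ℝ), 0 ≤ f t) (hq : 0 < q) (hc : 0 ≤ c)
    (hfle : ∀ t ≥ (0:ℝ), f t ≤ c * t ^ q)
    (hdefect0 : ∀ t ≥ (0:ℝ), 0 ≤ (q + 1) * Fint f t - f t * t)
    (hdefect : ∀ t ≥ (0:ℝ), (q + 1) * Fint f t - f t * t ≤ δ * t ^ p + K) (hδ : 0 ≤ δ) :
    (q + 1) * (∫ x in ball 0 R, φ x * Fint f (max (u x) 0)) -
        ∫ x in ball 0 R, φ x * f (max (u x) 0) * u x ≤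
      C₀ * (δ * (∫ x in ball 0 R, |u x| ^ p) +
        K * volume.real (ball (0 : EuclideanSpace ℝ (Fin N)) R)) := by
  set B := ball (0 : EuclideanSpace ℝ (Fin N)) R
  have : IsFiniteMeasure (volume.restrict B) := isFiniteMeasure_restrict.2 measure_ball_lt_top.ne
  have hLp := hu.1.1.restrict B
  have huq := integrable_abs_rpow_of_memLp hLp (by linarith) hq2
  have hup := integrable_abs_rpow_of_memLp hLp hp (hpq.trans hq2)
  have hφC' : ∀ᵐ x ∂volume.restrict B, |φ x| ≤ C₀ :=
    (ae_restrict_mem measurableSet_ball).mono hφC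
  have hus := hu.1.1.aestronglyMeasurable.restrict (s := B)
  have hF := integrable_mul_Fint_comp_max_zero hφ.aestronglyMeasurable hφC' hus huq hfc hf0
    (by linarith) hc hfle
  have hf := integrable_mul_comp_max_zero_mul hφ.aestronglyMeasurable hφC' hus huq hfc hf0 hq.le
    hc hfle
  have hf00 : f 0 = 0 :=
    le_antisymm (by simpa [Real.zero_rpow hq.ne'] using hfle 0 le_rfl) (hf0 0 le_rfl)
  have hid := fun x => mul_add_one_mul_Fint_sub_eq (q := q) hf00 (φ x) (u x)
  calc (q + 1) * (∫ x in B, φ x * Fint f (max (u x) 0)) - ∫ x in B, φ x * f (max (u x) 0) * u x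
      = ∫ x in B, φ x * ((q + 1) * Fint f (max (u x) 0) - f (max (u x) 0) * max (u x) 0) := by
        rw [← integral_const_mul, ← integral_sub (hF.const_mul _) hf]
        exact integral_congr_ae (Eventually.of_forall fun x => (hid x).symm)
    _ ≤ C₀ * (δ * (∫ x in B, |u x| ^ p) + K * volume.real B) := by
        rw [← measureReal_restrict_apply_univ]
        exact integral_mul_comp_max_zero_le hp.le hδ hφC' hdefect0 hdefect
          (((hF.const_mul _).sub hf).congr (Eventually.of_forall fun x => (hid x).symm)) hup

end Energy

section Absorption

variable {N : ℕ} {s p R : ℝ} {φ : EuclideanSpace ℝ (Fin N) → ℝ} {f : ℝ → ℝ} {q c C₀ m C : ℝ}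

theorem exists_add_one_mul_integral_sub_integral_le (hN : 0 < N) (he : 0 ≤ (N : ℝ) + s * p)
    (hR : 0 < R) (hp : 0 < p) (hpq : p ≤ q + 1) (hq2 : q + 1 ≤ (N : ℝ) * p / (N - s * p))
    (hφ : Measurable φ) (hφC : ∀ x ∈ ball (0 : EuclideanSpace ℝ (Fin N)) R, |φ x| ≤ C₀)
    (hfc : ContinuousOn f (Ici 0)) (hf0 : ∀ t ≥ (0:ℝ), 0 ≤ f t) (hq : 0 < q) (hc : 0 ≤ c)
    (hfle : ∀ t ≥ (0:ℝ), f t ≤ c * t ^ q)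
    (hdefect0 : ∀ t ≥ (0:ℝ), 0 ≤ (q + 1) * Fint f t - f t * t)
    (hdefect : ∀ t ≥ (0:ℝ), (q + 1) * Fint f t - f t * t ≤ C * t ^ m) (hm : m < p) (hC : 0 ≤ C)
    {η : ℝ} (hη : 0 < η) :
    ∃ K, ∀ u, memX N s p R u →
      (q + 1) * (∫ x in ball 0 R, φ x * Fint f (max (u x) 0)) -
        ∫ x in ball 0 R, φ x * f (max (u x) 0) * u x ≤ η * (gagP N s p u).toReal + K := by
  have hC₀ : 0 ≤ C₀ := (abs_nonneg _).trans (hφC 0 (mem_ball_self hR))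
  obtain ⟨κ, hκ0, hκ⟩ := exists_integral_ball_abs_rpow_le_gagP hN he hR
  set δ := η / (C₀ * κ + 1)
  have hδκ : C₀ * δ * κ ≤ η := by
    rw [mul_comm C₀, mul_assoc, div_mul_eq_mul_div, div_le_iff₀ (by positivity)]
    nlinarith [mul_nonneg hC₀ hκ0]
  obtain ⟨K, hK⟩ := exists_add_one_mul_Fint_sub_le hfc hf0 (by linarith) hc hfle hdefect hp hm hC
    (by positivity : 0 < δ)
  refine ⟨C₀ * (K * volume.real (ball (0 : EuclideanSpace ℝ (Fin N)) R)), fun u hu => ?_⟩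
  have hI := hκ u hu.1.1.aestronglyMeasurable hu.2 hu.1.2.ne
  have hsuper := add_one_mul_integral_sub_integral_le hu hp hpq hq2 hφ hφC hfc hf0 hq hc hfle
    hdefect0 hK (by positivity)
  nlinarith [mul_le_mul_of_nonneg_left hI (by positivity : 0 ≤ C₀ * δ),
    mul_le_mul_of_nonneg_right hδκ (ENNReal.toReal_nonneg : 0 ≤ (gagP N s p u).toReal)]

end Absorption

theorem palais_smale_bounded_general
    {N : ℕ} {p s : ℝ} (hp : 1 < p) (hs : 0 < s) (hN : s * p < N)
    (φ : EuclideanSpace ℝ (Fin N) → ℝ) (hφm : Measurable φ)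
    (hφloc : ∀ K : Set (EuclideanSpace ℝ (Fin N)), IsCompact K → ∃ C₀, ∀ x ∈ K, |φ x| ≤ C₀)
    (f : ℝ → ℝ) (hfc : ContinuousOn f (Set.Ici 0))
    (hf1 : ∀ t ≥ (0:ℝ), 0 ≤ f t)
    {q : ℝ} (hq1 : p - 1 < q) (hq2 : q < N * p / (N - s * p) - 1)
    (c μ : ℝ) (hc : 0 < c)
    (hf2 : ∀ t ≥ (0:ℝ), μ * t ^ q ≤ f t ∧ f t ≤ c * t ^ q)
    {m C : ℝ} (hm : m < p) (hC : 0 < C)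
    (hf3a : ∀ t ≥ (0:ℝ), 0 ≤ (q + 1) * Fint f t - f t * t ∧ (q + 1) * Fint f t - f t * t ≤ C * t ^ m)
    (R : ℝ) (hR : 0 < R)
    (u : ℕ → EuclideanSpace ℝ (Fin N) → ℝ) (hu : ∀ j, memX N s p R (u j))
    (c' : ℝ) (ε : ℕ → ℝ) (hε : Tendsto ε atTop (nhds 0))
    (hJ : Tendsto (fun j => JR N s p R φ f (u j)) atTop (nhds c'))
    (hPS : ∀ j, ∀ v, memX N s p R v →
      |pairing N s p (u j) v - ∫ x in Metric.ball (0 : EuclideanSpace ℝ (Fin N)) R, φ x * f (max (u j x) 0) * v x| ≤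
        ε j * gag N s p v) :
    ∃ C' : ℝ, ∀ j, gag N s p (u j) ≤ C' := by
  have hp0 : 0 < p := by linarith
  obtain ⟨C₀, hC₀⟩ := hφloc _ (isCompact_closedBall (0 : EuclideanSpace ℝ (Fin N)) R)
  set a := (q + 1) / p - 1 with ha_def
  have ha : 0 < a := by rw [sub_pos, one_lt_div hp0]; linarith
  obtain ⟨K, hK⟩ := exists_add_one_mul_integral_sub_integral_le (s := s)
    (by exact_mod_cast (mul_pos hs hp0).trans hN) (by positivity) hR hp0 (by linarith)
    (by linarith) hφm (fun x hx => hC₀ x (ball_subset_closedBall hx)) hfc hf1 (by linarith)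
    hc.le (fun t ht => (hf2 t ht).2) (fun t ht => (hf3a t ht).1) (fun t ht => (hf3a t ht).2)
    hm hC.le (half_pos ha)
  obtain ⟨M, hM⟩ := isBounded_iff_forall_norm_le.1 (isBounded_range_of_tendsto _ hJ)
  obtain ⟨E, hE⟩ := isBounded_iff_forall_norm_le.1 (isBounded_range_of_tendsto _ hε)
  obtain ⟨C', hC'⟩ :=
    exists_le_of_mul_rpow_le_add_mul (M := (q + 1) * M + K) (E := E) hp (half_pos ha)
  refine ⟨C', fun j => hC' _ (gag_nonneg _) ?_⟩
  have hJj : JR N s p R φ f (u j) ≤ M := (le_abs_self _).trans (hM _ ⟨j, rfl⟩)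
  have hεj : ε j * gag N s p (u j) ≤ E * gag N s p (u j) :=
    mul_le_mul_of_nonneg_right ((le_abs_self _).trans (hE _ ⟨j, rfl⟩)) (gag_nonneg _)
  have hid := sub_one_mul_toReal_gagP_eq (q := q) (φ := φ) (f := f) hp0.ne' (hu j)
  rw [← ha_def] at hid
  rw [gag_rpow hp0.ne']
  nlinarith [abs_le.1 (hPS j (u j) (hu j)), hK (u j) (hu j),
    mul_le_mul_of_nonneg_left hJj (by linarith : 0 ≤ q + 1)]

theorem palais_smale_bounded
    {N : ℕ} {p s : ℝ} (hp : 1 < p) (hs : 0 < s) (hs1 : s < 1) (hN : s * p < N)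
    (φ : EuclideanSpace ℝ (Fin N) → ℝ) (hφm : Measurable φ)
    (hφloc : ∀ K : Set (EuclideanSpace ℝ (Fin N)), IsCompact K → ∃ C₀, ∀ x ∈ K, |φ x| ≤ C₀)
    (ω Ω : Set (EuclideanSpace ℝ (Fin N)))
    (hωo : IsOpen ω) (hΩo : IsOpen Ω) (hωc : IsConnected ω) (hΩc : IsConnected Ω)
    (hΩb : Bornology.IsBounded Ω) (hωΩ : ω ⊆ Ω)
    (hWneg : ∀ x ∉ Ω, φ x ≤ 0) (hWpos : ∃ ε > (0:ℝ), ∀ x ∈ ω, ε ≤ φ x)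
    (f : ℝ → ℝ) (hfc : ContinuousOn f (Set.Ici 0))
    (hf1 : ∀ t ≥ (0:ℝ), 0 ≤ f t)
    {q : ℝ} (hq1 : p - 1 < q) (hq2 : q < N * p / (N - s * p) - 1)
    (c μ : ℝ) (hc : 0 < c) (hμ : 0 < μ)
    (hf2 : ∀ t ≥ (0:ℝ), μ * t ^ q ≤ f t ∧ f t ≤ c * t ^ q)
    {m C : ℝ} (hm : m < p) (hC : 0 < C)
    (hf3a : ∀ t ≥ (0:ℝ), 0 ≤ (q + 1) * Fint f t - f t * t ∧ (q + 1) * Fint f t - f t * t ≤ C * t ^ m)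
    (hf3b : ∀ t ≥ (0:ℝ), 0 ≤ f t * t - p * Fint f t ∧ f t * t - p * Fint f t ≤ C * t ^ (q + 1))
    (R : ℝ) (hR : 0 < R)
    (u : ℕ → EuclideanSpace ℝ (Fin N) → ℝ) (hu : ∀ j, memX N s p R (u j))
    (c' : ℝ) (ε : ℕ → ℝ) (hε : Tendsto ε atTop (nhds 0))
    (hJ : Tendsto (fun j => JR N s p R φ f (u j)) atTop (nhds c'))
    (hPS : ∀ j, ∀ v, memX N s p R v →
      |pairing N s p (u j) v - ∫ x in Metric.ball (0 : EuclideanSpace ℝ (Fin N)) R, φ x * f (max (u j x) 0) * v x| ≤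
        ε j * gag N s p v) :
    ∃ C' : ℝ, ∀ j, gag N s p (u j) ≤ C' :=
  palais_smale_bounded_general hp hs hN φ hφm hφloc f hfc hf1 hq1 hq2 c μ hc hf2 hm hC hf3a R hR u
    hu c' ε hε hJ hPS
end
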